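/- arXiv:math/0311524 — 2 statements merged into one kernel-verified Lean document; each statement's English description precedes it below -/
import Mathlib

section
/- Let n ≥ 1 and let p be an integer with p > 2(n+1). Let J ⊂ [0,1] be the closed interval [1/p, 1 - 1/p] and A = Jⁿ ⊂ [0,1]ⁿ, viewed as a subset of the torus Pⁿ = ℝⁿ/ℤⁿ. Let ν = (1/(n+1),…,1/(n+1)) ∈ ℝⁿ. Then the translates A + cν (mod ℤⁿ) for c = 0, 1, …, n cover the whole torus: ⋃_{c=0}^{n} (A + cν mod ℤⁿ) = Pⁿ. Equivalently, for every x ∈ ℝⁿ there exists c ∈ {0,…,n} such that every coordinate of x - cν, reduced mod 1, lies in [1/p, 1 - 1/p]. -/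
/-!
For a fixed coordinate `y = x i`, a shift `c` is bad when `y - c/(n+1)` lies within `1/p` of an
integer. Two distinct bad shifts `c₁ ≠ c₂` would put `(c₂ - c₁)/(n+1)` within `2/p < 1/(n+1)` of an
integer, which is impossible since `n + 1 ∤ c₂ - c₁`. So each of the `n` coordinates rules out at
most one of the `n + 1` shifts, and some shift is good for all coordinates.
-/

open Finset

theorem Finset.exists_mem_forall_not_of_card_lt {ι α : Type*} [Fintype ι] (s : Finset α)
    (bad : ι → α → Prop) (hbad : ∀ i, ∀ a ∈ s, ∀ b ∈ s, bad i a → bad i b → a = b)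
    (hcard : Fintype.card ι < #s) : ∃ a ∈ s, ∀ i, ¬ bad i a := by
  classical
  set badIn : ι → Finset α := fun i => s.filter (bad i)
  have hbadIn : ∀ i, #(badIn i) ≤ 1 := fun i =>
    Finset.card_le_one.mpr fun a ha b hb =>
      hbad i a (mem_filter.mp ha).1 b (mem_filter.mp hb).1 (mem_filter.mp ha).2 (mem_filter.mp hb).2
  have hunion : #(univ.biUnion badIn) < #s :=
    calc #(univ.biUnion badIn) ≤ ∑ i, #(badIn i) := card_biUnion_le
      _ ≤ ∑ _i : ι, 1 := sum_le_sum fun i _ => hbadIn i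
      _ < #s := by simpa using hcard
  obtain ⟨a, has, ha⟩ := exists_mem_notMem_of_card_lt_card hunion
  exact ⟨a, has, fun i hi => ha (mem_biUnion.mpr ⟨i, mem_univ i, mem_filter.mpr ⟨has, hi⟩⟩)⟩

theorem Int.exists_abs_sub_lt_of_fract_notMem_Icc {y ε : ℝ}
    (h : Int.fract y ∉ Set.Icc ε (1 - ε)) : ∃ k : ℤ, |y - k| < ε := by
  have hfract : y - ⌊y⌋ = Int.fract y := Int.self_sub_floor y
  have hfract_nonneg := Int.fract_nonneg y
  have hfract_lt_one := Int.fract_lt_one y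
  rcases not_and_or.mp h with hlow | hhigh
  · exact ⟨⌊y⌋, by rw [abs_lt]; constructor <;> linarith [not_le.mp hlow]⟩
  · exact ⟨⌊y⌋ + 1, by push_cast; rw [abs_lt]; constructor <;> linarith [not_le.mp hhigh]⟩

theorem inv_le_abs_intCast_div_sub_intCast {N : ℕ} {d : ℤ} (hd : d ≠ 0) (hdN : |d| < N) (k : ℤ) :
    1 / (N : ℝ) ≤ |(d : ℝ) / N - k| := by
  have hN : (0 : ℝ) < N := by exact_mod_cast (abs_pos.mpr hd).trans hdN
  have hnum : d - k * N ≠ 0 := fun h =>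
    hd (Int.eq_zero_of_abs_lt_dvd ⟨k, by linarith⟩ hdN)
  have hnum_abs : (1 : ℝ) ≤ |((d - k * N : ℤ) : ℝ)| := by exact_mod_cast Int.one_le_abs hnum
  have hrewrite : (d : ℝ) / N - k = ((d - k * N : ℤ) : ℝ) / N := by
    push_cast; field_simp
  rw [hrewrite, abs_div, abs_of_pos hN]
  exact div_le_div_of_nonneg_right hnum_abs hN.le

theorem eq_of_abs_sub_div_sub_intCast_lt {N : ℕ} {y ε : ℝ} (hε : 2 * ε ≤ 1 / N)
    {c₁ c₂ : ℕ} (hc₁ : c₁ < N) (hc₂ : c₂ < N)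
    (h₁ : ∃ k : ℤ, |y - c₁ / N - k| < ε) (h₂ : ∃ k : ℤ, |y - c₂ / N - k| < ε) : c₁ = c₂ := by
  obtain ⟨k₁, hk₁⟩ := h₁
  obtain ⟨k₂, hk₂⟩ := h₂
  by_contra hne
  set d : ℤ := (c₂ : ℤ) - c₁ with hd
  have hd0 : d ≠ 0 := sub_ne_zero.mpr (by exact_mod_cast Ne.symm hne)
  have hdN : |d| < N := abs_sub_lt_iff.mpr ⟨by omega, by omega⟩
  have hdiff : (d : ℝ) / N - (k₁ - k₂ : ℤ) = (y - c₁ / N - k₁) - (y - c₂ / N - k₂) := by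
    push_cast [hd]; ring
  have hlt : |(d : ℝ) / N - (k₁ - k₂ : ℤ)| < 1 / N := by
    rw [hdiff]
    linarith [abs_sub (y - c₁ / N - k₁) (y - c₂ / N - k₂)]
  exact (inv_le_abs_intCast_div_sub_intCast hd0 hdN _).not_gt hlt

theorem torus_cover_by_shifts_general (n p : ℕ) (hp : 2 * (n + 1) < p)
    (x : Fin n → ℝ) :
    ∃ c : ℕ, c ≤ n ∧ ∀ i : Fin n,
      Int.fract (x i - (c : ℝ) / ((n : ℝ) + 1)) ∈
        Set.Icc (1 / (p : ℝ)) (1 - 1 / p) := by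
  have hε : 2 * (1 / (p : ℝ)) ≤ 1 / ((n + 1 : ℕ) : ℝ) := by
    have hp' : (2 * (n + 1) : ℝ) < p := by exact_mod_cast hp
    rw [mul_one_div, div_le_div_iff₀ (by linarith) (by positivity)]
    push_cast; linarith
  obtain ⟨c, hc, hgood⟩ := Finset.exists_mem_forall_not_of_card_lt (range (n + 1))
    (fun i c => ∃ k : ℤ, |x i - c / ((n + 1 : ℕ) : ℝ) - k| < 1 / p)
    (fun i a ha b hb => eq_of_abs_sub_div_sub_intCast_lt hε (mem_range.mp ha) (mem_range.mp hb))
    (by simp)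
  refine ⟨c, Nat.lt_succ_iff.mp (mem_range.mp hc), fun i => not_not.mp fun hbad => hgood i ?_⟩
  simpa using Int.exists_abs_sub_lt_of_fract_notMem_Icc hbad

/-- Lemma (covering the torus by shifts of the middle cube): for every `x ∈ ℝⁿ`
there is a color `c ∈ {0,…,n}` such that every coordinate of `x - c·ν`,
reduced mod 1, lies in `[1/p, 1 - 1/p]`. -/
theorem torus_cover_by_shifts (n p : ℕ) (hn : 1 ≤ n) (hp : 2 * (n + 1) < p)
    (x : Fin n → ℝ) :
    ∃ c : ℕ, c ≤ n ∧ ∀ i : Fin n,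
      Int.fract (x i - (c : ℝ) / ((n : ℝ) + 1)) ∈
        Set.Icc (1 / (p : ℝ)) (1 - 1 / p) :=
  torus_cover_by_shifts_general n p hp x
end

section
/- Let p ≥ 5 be an integer and λ = 1/p. Consider in ℝⁿ the cube A = [1/p,1-1/p]ⁿ, the family Q₀ = ⋃_{γ∈ℤⁿ} (γ + A), and for a word w = l₁…l_k of letters in L = {1,…,p}ⁿ the cube A_w = h_w(A), where h_l : [0,1]ⁿ → [0,1]ⁿ is the homothety with ratio 1/p onto the l-th subcube of the subdivision of [0,1]ⁿ into pⁿ congruent subcubes, and h_w = h_{l₁}∘…∘h_{l_k}. Then for w ∈ W_k and w' ∈ W_{k-1}: A_w ⊆ A_{w'} if and only if w' is the initial subword of w of length k-1 and every coordinate of the last letter l_k ∈ {1,…,p}ⁿ differs from 1 and p. -/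
/-- The homothety `h_l` of ratio `1/p` mapping `[0,1]ⁿ` onto its `l`-th subcube
(letters `l ∈ L = {0,…,p-1}ⁿ`, 0-indexed). -/
noncomputable def subcubeHomothety (n p : ℕ) (l : Fin n → Fin p) (x : Fin n → ℝ) :
    Fin n → ℝ :=
  fun i => (x i + (l i : ℝ)) / p

/-- `h_w` for a word `w = l₁…l_k`: the composition `h_{l₁} ∘ … ∘ h_{l_k}`. -/
noncomputable def wordHomothety (n p : ℕ) (w : List (Fin n → Fin p)) :
    (Fin n → ℝ) → (Fin n → ℝ) :=
  w.foldr (fun l f => subcubeHomothety n p l ∘ f) id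

/-!
Unwinding the homotheties, `h_w x` has `i`-th coordinate `(x i + N) / p ^ k`, where `N` is the
integer whose base-`p` digits are the `i`-th coordinates of the letters of `w`. So `A_w` is a box,
and `A_w ⊆ A_{w'}` compares endpoints, which after clearing denominators reads
`p N' + 1 ≤ N ≤ p N' + p - 2` in every coordinate. Writing `w = u l` gives `N = p N_u + l_i` with
`l_i < p`, so this holds iff `N_u = N'` and `1 ≤ l_i ≤ p - 2`; by uniqueness of base-`p`
expansions, `N_u = N'` in every coordinate means `u = w'`.
-/

open Set

section AddDiv

variable {ι K : Type*} [Field K] [LinearOrder K] [IsStrictOrderedRing K]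

def addDivOrderIso (c : ι → K) (q : K) (hq : 0 < q) : (ι → K) ≃o (ι → K) where
  toFun x i := (x i + c i) / q
  invFun y i := q * y i - c i
  left_inv x := by ext i; field_simp; ring
  right_inv y := by ext i; field_simp; ring
  map_rel_iff' := by simp [Pi.le_def, div_le_div_iff_of_pos_right hq]

lemma coe_addDivOrderIso (c : ι → K) (q : K) (hq : 0 < q) :
    ⇑(addDivOrderIso c q hq) = fun x i => (x i + c i) / q := rfl

end AddDiv

variable {n p : ℕ}

/-- Most significant digit first: the last letter of `w` gives the units digit. -/
def digitValue (p : ℕ) (w : List (Fin n → Fin p)) (i : Fin n) : ℕ :=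
  Nat.ofDigits p (w.reverse.map fun l => (l i : ℕ))

lemma digitValue_append_singleton (w : List (Fin n → Fin p)) (l : Fin n → Fin p) (i : Fin n) :
    digitValue p (w ++ [l]) i = l i + p * digitValue p w i := by
  simp [digitValue, Nat.ofDigits_cons]

lemma digitValue_cons (l : Fin n → Fin p) (w : List (Fin n → Fin p)) (i : Fin n) :
    digitValue p (l :: w) i = digitValue p w i + p ^ w.length * l i := by
  simp [digitValue, Nat.ofDigits_append]

lemma eq_of_digitValue_eq (hp : 1 < p) {u w : List (Fin n → Fin p)} (hlen : u.length = w.length)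
    (h : ∀ i, digitValue p u i = digitValue p w i) : u = w := by
  have hmap (i : Fin n) : u.map (fun l => (l i : ℕ)) = w.map (fun l => (l i : ℕ)) := by
    apply List.reverse_injective
    simpa [← List.map_reverse] using Nat.ofDigits_inj_of_len_eq hp (by simp [hlen]) (by simp)
      (by simp) (h i)
  refine List.ext_getElem hlen fun j hu hw => funext fun i => Fin.ext ?_
  simpa [List.getElem?_eq_getElem hu, List.getElem?_eq_getElem hw] using
    congrArg (·[j]?) (hmap i)

lemma wordHomothety_apply (hp : 0 < p) (w : List (Fin n → Fin p)) (x : Fin n → ℝ) (i : Fin n) :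
    wordHomothety n p w x i = (x i + digitValue p w i) / (p : ℝ) ^ w.length := by
  induction w generalizing x with
  | nil => simp [wordHomothety, digitValue]
  | cons l w ih =>
    change subcubeHomothety n p l (wordHomothety n p w x) i = _
    rw [subcubeHomothety, ih, digitValue_cons, List.length_cons, pow_succ]
    push_cast
    field_simp
    ring

lemma wordHomothety_eq_addDivOrderIso (hp : 0 < p) (w : List (Fin n → Fin p)) :
    wordHomothety n p w =
      addDivOrderIso (fun i => (digitValue p w i : ℝ)) ((p : ℝ) ^ w.length) (by positivity) := by
  ext x i
  rw [wordHomothety_apply hp, coe_addDivOrderIso]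

/-! `(a + N) / p ^ k` with `a = 1 / p` (resp. `1 - 1 / p`) is the left (resp. right) end of a side
of `A_w` for a word `w` of length `k` with digit value `N`. -/

lemma left_endpoint_le_iff (hp : 2 ≤ p) (k N N' : ℕ) :
    (1 / (p : ℝ) + N') / p ^ k ≤ (1 / p + N) / p ^ (k + 1) ↔ p * N' + 1 ≤ N := by
  have hP : (2 : ℝ) ≤ p := by exact_mod_cast hp
  have hinv : 0 < 1 / (p : ℝ) ∧ 1 / (p : ℝ) < 1 := ⟨by positivity, by rw [div_lt_one] <;> linarith⟩
  rw [pow_succ, ← div_div, le_div_iff₀ (by linarith), div_mul_eq_mul_div,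
    div_le_div_iff_of_pos_right (by positivity),
    show (1 / (p : ℝ) + N') * p = 1 + p * N' by field_simp]
  constructor
  · intro h
    by_contra! hlt
    have : (N : ℝ) ≤ p * N' := by exact_mod_cast Nat.le_of_lt_succ hlt
    linarith
  · intro h
    have : (p * N' + 1 : ℝ) ≤ N := by exact_mod_cast h
    linarith

lemma right_endpoint_le_iff (hp : 2 ≤ p) (k N N' : ℕ) :
    (1 - 1 / (p : ℝ) + N) / p ^ (k + 1) ≤ (1 - 1 / p + N') / p ^ k ↔ N ≤ p * N' + (p - 2) := by
  have hP : (2 : ℝ) ≤ p := by exact_mod_cast hp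
  have hinv : 0 < 1 / (p : ℝ) ∧ 1 / (p : ℝ) < 1 := ⟨by positivity, by rw [div_lt_one] <;> linarith⟩
  rw [pow_succ, ← div_div, div_le_iff₀ (by linarith), div_mul_eq_mul_div,
    div_le_div_iff_of_pos_right (by positivity),
    show (1 - 1 / (p : ℝ) + N') * p = p - 1 + p * N' by field_simp]
  have hcast : ((p * N' + (p - 2) : ℕ) : ℝ) = p * N' + p - 2 := by
    push_cast [Nat.cast_sub hp]; ring
  constructor
  · intro h
    by_contra! hlt
    have : (p * N' + p - 2 + 1 : ℝ) ≤ N := by rw [← hcast]; exact_mod_cast hlt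
    linarith
  · intro h
    have : (N : ℝ) ≤ p * N' + p - 2 := by rw [← hcast]; exact_mod_cast h
    linarith

lemma le_add_mul_le_iff {p a b m : ℕ} (hm : m < p) :
    p * a + 1 ≤ m + p * b ∧ m + p * b ≤ p * a + (p - 2) ↔ b = a ∧ 1 ≤ m ∧ m ≤ p - 2 := by
  constructor
  · rintro ⟨h₁, h₂⟩
    have hb : (m + p * b) / p = b := by
      rw [Nat.add_mul_div_left _ _ (by omega), Nat.div_eq_of_lt hm, zero_add]
    have ha : (m + p * b) / p = a :=
      Nat.div_eq_of_lt_le (by linarith [mul_comm a p])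
        (by have : p - 2 < p := by omega
            linarith [add_mul a 1 p, mul_comm a p])
    obtain rfl : b = a := hb.symm.trans ha
    omega
  · rintro ⟨rfl, h₁, h₂⟩
    omega

noncomputable def innerCube (n p : ℕ) : Set (Fin n → ℝ) :=
  Icc (fun _ => 1 / (p : ℝ)) (fun _ => 1 - 1 / p)

lemma image_innerCube_subset_iff (hp : 2 ≤ p) {u w : List (Fin n → Fin p)}
    (hlen : u.length = w.length) (l : Fin n → Fin p) :
    wordHomothety n p (u ++ [l]) '' innerCube n p ⊆ wordHomothety n p w '' innerCube n p ↔
      u = w ∧ ∀ i, 1 ≤ (l i : ℕ) ∧ (l i : ℕ) ≤ p - 2 := by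
  have hcube : (fun _ : Fin n => 1 / (p : ℝ)) ≤ fun _ => 1 - 1 / (p : ℝ) := fun _ => by
    have : (2 : ℝ) ≤ p := by exact_mod_cast hp
    dsimp only
    rw [le_sub_iff_add_le, ← two_mul, mul_one_div, div_le_one] <;> linarith
  rw [innerCube, wordHomothety_eq_addDivOrderIso (by omega),
    wordHomothety_eq_addDivOrderIso (by omega), OrderIso.image_Icc, OrderIso.image_Icc,
    Icc_subset_Icc_iff ((OrderIso.monotone _) hcube)]
  simp only [coe_addDivOrderIso, Pi.le_def, ← forall_and, List.length_append,
    List.length_singleton, hlen]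
  have hcoord (i : Fin n) :
      _ ↔ digitValue p u i = digitValue p w i ∧ 1 ≤ (l i : ℕ) ∧ (l i : ℕ) ≤ p - 2 :=
    (and_congr (left_endpoint_le_iff hp w.length (digitValue p (u ++ [l]) i) (digitValue p w i))
      (right_endpoint_le_iff hp w.length (digitValue p (u ++ [l]) i) (digitValue p w i))).trans
      (by rw [digitValue_append_singleton]; exact le_add_mul_le_iff (l i).isLt)
  rw [forall_congr' hcoord, forall_and]
  exact and_congr_left' ⟨eq_of_digitValue_eq (by omega) hlen, fun h _ => h ▸ rfl⟩

/-- For words `w ∈ W_k`, `w' ∈ W_{k-1}`: `A_w ⊆ A_{w'}` iff `w'` is the initial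
subword of `w` and every coordinate of the last letter of `w` differs from the two
extreme values (1 and p in 1-indexed notation, i.e. `0` and `p-1` here). -/
theorem subcube_containment (n p : ℕ) (hp : 5 ≤ p)
    (A : Set (Fin n → ℝ))
    (hA : A = {x | ∀ i, x i ∈ Set.Icc (1 / (p : ℝ)) (1 - 1 / p)})
    (k : ℕ) (hk : 1 ≤ k) (w w' : List (Fin n → Fin p))
    (hw : w.length = k) (hw' : w'.length = k - 1) :
    wordHomothety n p w '' A ⊆ wordHomothety n p w' '' A ↔
      ∃ l : Fin n → Fin p, w = w' ++ [l] ∧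
        ∀ i : Fin n, (l i : ℕ) ≠ 0 ∧ (l i : ℕ) ≠ p - 1 := by
  obtain ⟨u, l, rfl⟩ : ∃ u l, w = u ++ [l] :=
    (List.eq_nil_or_concat' w).resolve_left (by rintro rfl; rw [List.length_nil] at hw; omega)
  have hu : u.length = w'.length := by
    rw [List.length_append, List.length_singleton] at hw; omega
  have hA' : A = innerCube n p := by
    ext x
    simp [hA, innerCube, Pi.le_def, forall_and]
  rw [hA', image_innerCube_subset_iff (by omega) hu]
  constructor
  · rintro ⟨rfl, hl⟩
    exact ⟨l, rfl, fun i => by have := hl i; omega⟩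
  · rintro ⟨l', heq, hl'⟩
    obtain ⟨rfl, rfl⟩ := List.append_singleton_inj.mp heq
    exact ⟨rfl, fun i => by have := hl' i; have := (l i).isLt; omega⟩
end
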